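/- arXiv:math/0205115 — 2 statements merged into one kernel-verified Lean document; each statement's English description precedes it below -/
import Mathlib

section
/- Any root λ of λ⁴ + (Γ²/20)λ² + (9/400)Γ⁴ = 0 with Γ ≠ 0 real satisfies |λ| = (|Γ|/2)·√(3/5); moreover λ has nonzero real part, so the system is linearly unstable. -/
/-!
Substituting `μ = λ²` turns the quartic into the real quadratic `μ² + (Γ²/20) μ + (9/400) Γ⁴`,
whose discriminant `-(35/400) Γ⁴` is negative. Hence `λ²` is non-real, which rules out
`Re λ = 0`, and `|λ²|²` equals the product of the two conjugate roots `(9/400) Γ⁴`.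
-/

open Complex

namespace Complex

variable {b c : ℝ} {z : ℂ}

theorem im_ne_zero_of_quadratic_eq_zero (hdisc : b ^ 2 < 4 * c)
    (hz : z ^ 2 + b * z + c = 0) : z.im ≠ 0 := by
  intro him
  have hre : z.re ^ 2 + b * z.re + c = 0 := by
    simpa [pow_two, him] using congrArg re hz
  nlinarith [sq_nonneg (2 * z.re + b)]

theorem normSq_eq_of_quadratic_eq_zero (hdisc : b ^ 2 < 4 * c)
    (hz : z ^ 2 + b * z + c = 0) : normSq z = c := by
  have hre : z.re ^ 2 - z.im ^ 2 + b * z.re + c = 0 := by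
    simpa [pow_two] using congrArg re hz
  have him : (2 * z.re + b) * z.im = 0 := by
    have h := congrArg im hz
    simp only [pow_two, add_im, mul_im, ofReal_re, ofReal_im, zero_im] at h
    linear_combination h
  -- a non-real root lies on the symmetry axis `Re z = -b/2`
  have haxis : 2 * z.re + b = 0 :=
    (mul_eq_zero.mp him).resolve_right (im_ne_zero_of_quadratic_eq_zero hdisc hz)
  rw [normSq_apply]
  linear_combination -hre + z.re * haxis

end Complex

/-- Every root of λ⁴ + (Γ²/20)λ² + (9/400)Γ⁴ = 0 has modulus
    (|Γ|/2)√(3/5) and nonzero real part (linear instability). -/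
theorem quartic_root_modulus_and_instability (Γ : ℝ) (hΓ : Γ ≠ 0) (lam : ℂ)
    (hroot : lam ^ 4 + ((Γ : ℂ) ^ 2 / 20) * lam ^ 2
        + (9 / 400) * (Γ : ℂ) ^ 4 = 0) :
    ‖lam‖ = (|Γ| / 2) * Real.sqrt (3 / 5) ∧ lam.re ≠ 0 := by
  have hdisc : (Γ ^ 2 / 20) ^ 2 < 4 * (9 / 400 * Γ ^ 4) := by
    have : 0 < Γ ^ 4 := by positivity
    nlinarith
  have hsq : (lam ^ 2) ^ 2 + ((Γ ^ 2 / 20 : ℝ) : ℂ) * lam ^ 2 + ((9 / 400 * Γ ^ 4 : ℝ) : ℂ) = 0 := by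
    push_cast
    linear_combination hroot
  constructor
  · have hnorm4 : ‖lam‖ ^ 4 = ((|Γ| / 2) * Real.sqrt (3 / 5)) ^ 4 := by
      have h35 : Real.sqrt (3 / 5) ^ 2 = 3 / 5 := Real.sq_sqrt (by norm_num)
      calc ‖lam‖ ^ 4 = normSq (lam ^ 2) := by rw [map_pow, ← Complex.sq_norm]; ring
        _ = 9 / 400 * Γ ^ 4 := normSq_eq_of_quadratic_eq_zero hdisc hsq
        _ = (|Γ| ^ 2 / 4 * Real.sqrt (3 / 5) ^ 2) ^ 2 := by rw [sq_abs, h35]; ring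
        _ = ((|Γ| / 2) * Real.sqrt (3 / 5)) ^ 4 := by ring
    exact (pow_left_inj₀ (norm_nonneg _) (by positivity) (by norm_num)).mp hnorm4
  · intro hre
    apply im_ne_zero_of_quadratic_eq_zero hdisc hsq
    simp [pow_two, hre]
end

section
/- The quantity I = 2A_{1,2}(ω₁ω₃ + ω₂ω₄) + A₂ω_p² is conserved along solutions of the five-dimensional Galerkin truncation: ω̇₁ = −A₂ω_pω₂, ω̇₂ = A₁ω_pω₁ − A₂ω_pω₃, ω̇₃ = A₂ω_pω₂ − A₁ω_pω₄, ω̇₄ = A₂ω_pω₃, ω̇_p = A_{1,2}(ω₃ω₄ − ω₁ω₂), where A₁ = −3/10, A₂ = 1/2, A_{1,2} = −4/5. -/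
/-! Along the flow, (ω₁ω₃ + ω₂ω₄)' = A₂ω_p(ω₁ω₂ − ω₃ω₄) because the A₁ terms cancel, while
(ω_p²)' = 2A₁₂ω_p(ω₃ω₄ − ω₁ω₂); the two contributions to I' are opposite, so I is constant. -/

theorem hasDerivAt_galerkin_invariant {A₁ A₂ A₁₂ : ℝ} {w₁ w₂ w₃ w₄ wp : ℝ → ℝ} {t : ℝ}
    (h1 : HasDerivAt w₁ (-A₂ * wp t * w₂ t) t)
    (h2 : HasDerivAt w₂ (A₁ * wp t * w₁ t - A₂ * wp t * w₃ t) t)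
    (h3 : HasDerivAt w₃ (A₂ * wp t * w₂ t - A₁ * wp t * w₄ t) t)
    (h4 : HasDerivAt w₄ (A₂ * wp t * w₃ t) t)
    (hp : HasDerivAt wp (A₁₂ * (w₃ t * w₄ t - w₁ t * w₂ t)) t) :
    HasDerivAt (fun s => 2 * A₁₂ * (w₁ s * w₃ s + w₂ s * w₄ s) + A₂ * wp s ^ 2) 0 t := by
  have h := (((h1.mul h3).add (h2.mul h4)).const_mul (2 * A₁₂)).add ((hp.pow 2).const_mul A₂)
  exact h.congr_deriv (by push_cast; ring)

theorem I_invariant_general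
    (A₁ A₂ A₁₂ : ℝ)
    (w₁ w₂ w₃ w₄ wp : ℝ → ℝ)
    (h1 : ∀ t, HasDerivAt w₁ (-A₂ * wp t * w₂ t) t)
    (h2 : ∀ t, HasDerivAt w₂ (A₁ * wp t * w₁ t - A₂ * wp t * w₃ t) t)
    (h3 : ∀ t, HasDerivAt w₃ (A₂ * wp t * w₂ t - A₁ * wp t * w₄ t) t)
    (h4 : ∀ t, HasDerivAt w₄ (A₂ * wp t * w₃ t) t)
    (hp : ∀ t, HasDerivAt wp (A₁₂ * (w₃ t * w₄ t - w₁ t * w₂ t)) t) :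
    ∀ t t' : ℝ,
      2 * A₁₂ * (w₁ t * w₃ t + w₂ t * w₄ t) + A₂ * wp t ^ 2
        = 2 * A₁₂ * (w₁ t' * w₃ t' + w₂ t' * w₄ t') + A₂ * wp t' ^ 2 := by
  have hI : ∀ t, HasDerivAt
      (fun s => 2 * A₁₂ * (w₁ s * w₃ s + w₂ s * w₄ s) + A₂ * wp s ^ 2) 0 t := fun t =>
    hasDerivAt_galerkin_invariant (h1 t) (h2 t) (h3 t) (h4 t) (hp t)
  exact is_const_of_deriv_eq_zero (fun t => (hI t).differentiableAt) (fun t => (hI t).deriv)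

/-- I = 2A₁₂(ω₁ω₃ + ω₂ω₄) + A₂ω_p² is conserved along the
    five-dimensional Galerkin truncation of the 2D Euler equation. -/
theorem I_invariant
    (A₁ A₂ A₁₂ : ℝ) (hA₁ : A₁ = -3 / 10) (hA₂ : A₂ = 1 / 2) (hA₁₂ : A₁₂ = -4 / 5)
    (w₁ w₂ w₃ w₄ wp : ℝ → ℝ)
    (h1 : ∀ t, HasDerivAt w₁ (-A₂ * wp t * w₂ t) t)
    (h2 : ∀ t, HasDerivAt w₂ (A₁ * wp t * w₁ t - A₂ * wp t * w₃ t) t)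
    (h3 : ∀ t, HasDerivAt w₃ (A₂ * wp t * w₂ t - A₁ * wp t * w₄ t) t)
    (h4 : ∀ t, HasDerivAt w₄ (A₂ * wp t * w₃ t) t)
    (hp : ∀ t, HasDerivAt wp (A₁₂ * (w₃ t * w₄ t - w₁ t * w₂ t)) t) :
    ∀ t t' : ℝ,
      2 * A₁₂ * (w₁ t * w₃ t + w₂ t * w₄ t) + A₂ * wp t ^ 2
        = 2 * A₁₂ * (w₁ t' * w₃ t' + w₂ t' * w₄ t') + A₂ * wp t' ^ 2 :=
  I_invariant_general A₁ A₂ A₁₂ w₁ w₂ w₃ w₄ wp h1 h2 h3 h4 hp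
end
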